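/- arXiv:1904.02334 — 2 statements merged into one kernel-verified Lean document; each statement's English description precedes it below -/
import Mathlib

section
/- Let V ∈ ℝ^{B×N}, W ∈ ℝ^{B×K}, H ∈ ℝ^{K×N} have all entries strictly positive, and let D_IS(X ‖ Y) = Σ_{i,n} ( X_{in}/Y_{in} − log(X_{in}/Y_{in}) − 1 ) denote the Itakura–Saito divergence between entrywise positive matrices of equal size. Define the updated matrix H⁺ entrywise by H⁺_{kn} = H_{kn} · sqrt( [ Wᵀ( V ⊙ (WH)^{⊙(−2)} ) ]_{kn} / [ Wᵀ(WH)^{⊙(−1)} ]_{kn} ). Then D_IS(V ‖ W H⁺) ≤ D_IS(V ‖ W H). -/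
open Finset Matrix

/-- Itakura–Saito divergence between two entrywise positive matrices of equal size:
`D_IS(X‖Y) = Σ_{i,n} (X_{in}/Y_{in} − log(X_{in}/Y_{in}) − 1)`. -/
noncomputable def ISdiv {I N : Type*} [Fintype I] [Fintype N]
    (X Y : Matrix I N ℝ) : ℝ :=
  ∑ i, ∑ n, (X i n / Y i n - Real.log (X i n / Y i n) - 1)

/-!
Majorization–minimization. In `D_IS(V ‖ WH') = Σ (v/x' + log x' - log v - 1)`, with
`x' = Σ_k W_k H'_k`, bound the convex part `v/x'` by Jensen's inequality (Cauchy–Schwarz) with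
weights `W_k H_k / x`, and the concave part `log x'` by its tangent at `x = Σ_k W_k H_k`. The
resulting surrogate `Σ_{k,n} (H² P / H' + Q H') + const` touches the divergence at `H' = H` and
separates over the entries of `H'`; each term `a / t + Q t` is minimized at `t = √(a / Q)`,
which for `a = H² P` is exactly the multiplicative update `H √(P / Q)`.
-/

lemma isMinOn_div_add_mul_sqrt_div {a q : ℝ} (ha : 0 ≤ a) (hq : 0 < q) :
    IsMinOn (fun t => a / t + q * t) (Set.Ioi 0) √(a / q) := by
  refine isMinOn_iff.mpr fun t (ht : 0 < t) => ?_
  set r := √(a / q)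
  have ha_eq : a = q * r ^ 2 := by
    rw [Real.sq_sqrt (div_nonneg ha hq.le)]; field_simp
  have hr : 0 ≤ r := Real.sqrt_nonneg _
  have hmin : a / r + q * r = 2 * q * r := by
    rcases hr.eq_or_lt with hr0 | hr0
    · simp [ha_eq, ← hr0]
    · rw [ha_eq]; field_simp; ring
  have hgap : a / t + q * t - 2 * q * r = q * (r - t) ^ 2 / t := by
    rw [ha_eq]; field_simp; ring
  change a / r + q * r ≤ a / t + q * t
  rw [hmin, ← sub_nonneg, hgap]
  positivity

lemma log_le_log_add_div_sub_one {x y : ℝ} (hx : 0 < x) (hy : 0 < y) :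
    Real.log y ≤ Real.log x + y / x - 1 := by
  have := Real.log_le_sub_one_of_pos (div_pos hy hx)
  rw [Real.log_div hy.ne' hx.ne'] at this
  linarith

section

variable {ι κ ν : Type*} [Fintype κ]

lemma inv_sum_mul_le_sum_mul_sq_div {w h h' : κ → ℝ} (hw : ∀ k, 0 < w k) (hh' : ∀ k, 0 < h' k)
    (hx : ∑ k, w k * h k ≠ 0) :
    (∑ k, w k * h' k)⁻¹ ≤ (∑ k, w k * h k)⁻¹ ^ 2 * ∑ k, w k * (h k ^ 2 / h' k) := by
  have hcs := sq_sum_div_le_sum_sq_div univ (fun k => w k * h k)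
    (fun k _ => mul_pos (hw k) (hh' k))
  have hterm : ∀ k, (w k * h k) ^ 2 / (w k * h' k) = w k * (h k ^ 2 / h' k) := fun k => by
    have := (hw k).ne'
    field_simp
  simp only [hterm] at hcs
  calc (∑ k, w k * h' k)⁻¹
      = (∑ k, w k * h k)⁻¹ ^ 2 * ((∑ k, w k * h k) ^ 2 / ∑ k, w k * h' k) := by
        field_simp
    _ ≤ _ := by gcongr

lemma div_sub_log_div_sub_one_le [Nonempty κ] {v : ℝ} {w h h' : κ → ℝ} (hv : 0 < v)
    (hw : ∀ k, 0 < w k) (hh : ∀ k, 0 < h k) (hh' : ∀ k, 0 < h' k) :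
    v / (∑ k, w k * h' k) - Real.log (v / ∑ k, w k * h' k) - 1 ≤
      v * (∑ k, w k * h k)⁻¹ ^ 2 * (∑ k, w k * (h k ^ 2 / h' k))
        + (∑ k, w k * h' k) / (∑ k, w k * h k) + Real.log ((∑ k, w k * h k) / v) - 2 := by
  have hx : 0 < ∑ k, w k * h k := sum_pos (fun k _ => mul_pos (hw k) (hh k)) univ_nonempty
  have hx' : 0 < ∑ k, w k * h' k := sum_pos (fun k _ => mul_pos (hw k) (hh' k)) univ_nonempty
  have hconvex := mul_le_mul_of_nonneg_left (inv_sum_mul_le_sum_mul_sq_div hw hh' hx.ne') hv.le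
  have hconcave := log_le_log_add_div_sub_one hx hx'
  rw [Real.log_div hv.ne' hx'.ne', Real.log_div hx.ne' hv.ne', div_eq_mul_inv v]
  linarith

lemma mul_apply_pos_of_pos [Nonempty κ] {W : Matrix ι κ ℝ} {H : Matrix κ ν ℝ}
    (hW : ∀ b k, 0 < W b k) (hH : ∀ k n, 0 < H k n)
    (b : ι) (n : ν) : 0 < (W * H) b n :=
  sum_pos (fun k _ => mul_pos (hW b k) (hH k n)) univ_nonempty

variable [Fintype ι] (V : Matrix ι ν ℝ) (W : Matrix ι κ ℝ) (H : Matrix κ ν ℝ)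

/-- `isGradPos W H - isGradNeg V W H` is the gradient of `H ↦ ISdiv V (W * H)`. -/
noncomputable def isGradNeg : Matrix κ ν ℝ :=
  Wᵀ * of fun b n => V b n * ((W * H) b n)⁻¹ ^ 2

noncomputable def isGradPos : Matrix κ ν ℝ :=
  Wᵀ * of fun b n => ((W * H) b n)⁻¹

variable {V W H}

lemma isGradNeg_pos [Nonempty ι] (hV : ∀ b n, 0 < V b n) (hW : ∀ b k, 0 < W b k)
    (hX : ∀ b n, 0 < (W * H) b n) (k : κ) (n : ν) : 0 < isGradNeg V W H k n :=
  sum_pos (fun b _ => mul_pos (hW b k) (mul_pos (hV b n) (pow_pos (inv_pos.mpr (hX b n)) 2)))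
    univ_nonempty

lemma isGradPos_pos [Nonempty ι] (hW : ∀ b k, 0 < W b k) (hX : ∀ b n, 0 < (W * H) b n)
    (k : κ) (n : ν) : 0 < isGradPos W H k n :=
  sum_pos (fun b _ => mul_pos (hW b k) (inv_pos.mpr (hX b n))) univ_nonempty

variable [Fintype ν]

lemma sum_sum_transpose_mul_apply_mul (A : Matrix ι κ ℝ) (M : Matrix ι ν ℝ) (F : Matrix κ ν ℝ) :
    ∑ k, ∑ n, (Aᵀ * M) k n * F k n = ∑ b, ∑ n, M b n * (A * F) b n := by
  simp only [mul_apply, transpose_apply, Finset.sum_mul, Finset.mul_sum]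
  rw [Finset.sum_comm, Finset.sum_congr rfl fun n _ => Finset.sum_comm, Finset.sum_comm]
  exact sum_congr rfl fun _ _ => sum_congr rfl fun _ _ => sum_congr rfl fun _ _ => by ring

variable (V W H) in
noncomputable def isSurrogate (H' : Matrix κ ν ℝ) : ℝ :=
  ∑ k, ∑ n, (H k n ^ 2 * isGradNeg V W H k n / H' k n + isGradPos W H k n * H' k n)
    + ∑ b, ∑ n, (Real.log ((W * H) b n / V b n) - 2)

variable (V W H) in
lemma isSurrogate_eq_sum (H' : Matrix κ ν ℝ) :
    isSurrogate V W H H' = ∑ b, ∑ n,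
      (V b n * ((W * H) b n)⁻¹ ^ 2 * (W * of fun k n => H k n ^ 2 / H' k n) b n
        + (W * H') b n / (W * H) b n + Real.log ((W * H) b n / V b n) - 2) := by
  have hneg := sum_sum_transpose_mul_apply_mul W (of fun b n => V b n * ((W * H) b n)⁻¹ ^ 2)
    (of fun k n => H k n ^ 2 / H' k n)
  have hpos := sum_sum_transpose_mul_apply_mul W (of fun b n => ((W * H) b n)⁻¹) H'
  simp only [of_apply] at hneg hpos
  have hterm : ∀ k n, H k n ^ 2 * isGradNeg V W H k n / H' k n + isGradPos W H k n * H' k n =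
      isGradNeg V W H k n * (H k n ^ 2 / H' k n) + isGradPos W H k n * H' k n := fun k n => by
    ring
  simp only [isSurrogate, hterm, sum_add_distrib]
  rw [isGradNeg, isGradPos, hneg, hpos, ← sum_add_distrib, ← sum_add_distrib]
  refine sum_congr rfl fun b _ => ?_
  rw [← sum_add_distrib, ← sum_add_distrib]
  exact sum_congr rfl fun n _ => by ring

lemma ISdiv_mul_le_isSurrogate [Nonempty κ] (hV : ∀ b n, 0 < V b n) (hW : ∀ b k, 0 < W b k)
    (hH : ∀ k n, 0 < H k n) {H' : Matrix κ ν ℝ} (hH' : ∀ k n, 0 < H' k n) :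
    ISdiv V (W * H') ≤ isSurrogate V W H H' := by
  rw [isSurrogate_eq_sum]
  exact sum_le_sum fun b _ => sum_le_sum fun n _ =>
    div_sub_log_div_sub_one_le (hV b n) (hW b) (hH · n) (hH' · n)

lemma isSurrogate_self (hX : ∀ b n, (W * H) b n ≠ 0) :
    isSurrogate V W H H = ISdiv V (W * H) := by
  rw [isSurrogate_eq_sum]
  refine sum_congr rfl fun b _ => sum_congr rfl fun n _ => ?_
  have hsq : (W * of fun k n => H k n ^ 2 / H k n) = W * H := by
    congr 1; ext k n; simp [sq]
  rw [hsq, ← inv_div (V b n), Real.log_inv]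
  field_simp [hX b n]
  ring

lemma isSurrogate_update_le (hH : ∀ k n, 0 ≤ H k n) (hP : ∀ k n, 0 ≤ isGradNeg V W H k n)
    (hQ : ∀ k n, 0 < isGradPos W H k n) {Hplus H' : Matrix κ ν ℝ}
    (hHplus : ∀ k n, Hplus k n = H k n * √(isGradNeg V W H k n / isGradPos W H k n))
    (hH' : ∀ k n, 0 < H' k n) :
    isSurrogate V W H Hplus ≤ isSurrogate V W H H' := by
  refine add_le_add_left (sum_le_sum fun k _ => sum_le_sum fun n _ => ?_) _
  have hsqrt : Hplus k n = √(H k n ^ 2 * isGradNeg V W H k n / isGradPos W H k n) := by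
    rw [hHplus, mul_div_assoc, Real.sqrt_mul' _ (div_nonneg (hP k n) (hQ k n).le),
      Real.sqrt_sq (hH k n)]
  rw [hsqrt]
  exact isMinOn_iff.mp (isMinOn_div_add_mul_sqrt_div (mul_nonneg (sq_nonneg _) (hP k n)) (hQ k n))
    _ (hH' k n)

end

/-- The majorization-minimization multiplicative activation update for
Itakura–Saito NMF does not increase the IS divergence. -/
theorem IS_NMF_activation_update_decreases_divergence
    (B K N : ℕ)
    (V : Matrix (Fin B) (Fin N) ℝ) (W : Matrix (Fin B) (Fin K) ℝ)
    (H : Matrix (Fin K) (Fin N) ℝ)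
    (hV : ∀ b n, 0 < V b n) (hW : ∀ b k, 0 < W b k) (hH : ∀ k n, 0 < H k n)
    (Hplus : Matrix (Fin K) (Fin N) ℝ)
    (hHplus : ∀ k n, Hplus k n = H k n * Real.sqrt
      (((Wᵀ * (Matrix.of fun (b : Fin B) (n : Fin N) =>
            V b n * ((W * H) b n)⁻¹ ^ 2) : Matrix (Fin K) (Fin N) ℝ) k n) /
       ((Wᵀ * (Matrix.of fun (b : Fin B) (n : Fin N) =>
            ((W * H) b n)⁻¹) : Matrix (Fin K) (Fin N) ℝ) k n))) :
    ISdiv V (W * Hplus) ≤ ISdiv V (W * H) := by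
  rcases isEmpty_or_nonempty (Fin B) with hB | hB
  · simp [ISdiv]
  rcases isEmpty_or_nonempty (Fin K) with hK | hK
  · rw [Subsingleton.elim Hplus H]
  have hX := mul_apply_pos_of_pos hW hH
  have hP := isGradNeg_pos hV hW hX
  have hQ := isGradPos_pos hW hX
  have hHplus_pos : ∀ k n, 0 < Hplus k n := fun k n => by
    rw [hHplus]
    exact mul_pos (hH k n) (Real.sqrt_pos.mpr (div_pos (hP k n) (hQ k n)))
  calc ISdiv V (W * Hplus)
      ≤ isSurrogate V W H Hplus := ISdiv_mul_le_isSurrogate hV hW hH hHplus_pos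
    _ ≤ isSurrogate V W H H := isSurrogate_update_le (hH · · |>.le) (hP · · |>.le) hQ hHplus hH
    _ = ISdiv V (W * H) := isSurrogate_self (hX · · |>.ne')
end

section
/- Let V ∈ ℝ^{B×N}, W ∈ ℝ^{B×K}, H ∈ ℝ^{K×N} have all entries strictly positive, and let D_IS(X ‖ Y) = Σ_{i,n} ( X_{in}/Y_{in} − log(X_{in}/Y_{in}) − 1 ) denote the Itakura–Saito divergence between entrywise positive matrices of equal size. Define the updated matrix W⁺ entrywise by W⁺_{bk} = W_{bk} · sqrt( [ ( V ⊙ (WH)^{⊙(−2)} ) Hᵀ ]_{bk} / [ (WH)^{⊙(−1)} Hᵀ ]_{bk} ). Then D_IS(V ‖ W⁺ H) ≤ D_IS(V ‖ W H). -/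
open Finset Matrix

/-! The update is one majorization–minimization step. Write `Ỹ = W * H`. For positive `X`, the
convex part `V / (X * H)` of the divergence is bounded by Jensen's inequality with weights
`W b k * H k n / Ỹ b n`, and the concave part `log (X * H)` by its tangent at `Ỹ`. The resulting
auxiliary function `G X` majorizes `D_IS(V ‖ X * H)` up to a constant, with equality at `X = W`,
and it splits over the entries of `X` as `∑ b k, (W b k ^ 2 / X b k * P b k + X b k * Q b k)`
plus a constant, where `P` and `Q` are the numerator and denominator of the update. Each summand
is minimal at `X b k = W b k * √(P b k / Q b k)`, which is `W⁺`; hence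
`D_IS(V ‖ W⁺ * H) ≤ G(W⁺) ≤ G(W) = D_IS(V ‖ W * H)`. -/

open Real

theorem isMinOn_sq_mul_div_add_mul (w : ℝ) {P Q : ℝ} (hP : 0 ≤ P) (hQ : 0 ≤ Q) :
    IsMinOn (fun x => w ^ 2 / x * P + x * Q) (Set.Ioi 0) (w * √(P / Q)) := by
  refine isMinOn_iff.2 fun x (hx : 0 < x) => ?_
  have hfx : 0 ≤ w ^ 2 / x * P + x * Q := by positivity
  set s := √(P / Q) with hs
  rcases hQ.eq_or_lt with rfl | hQ
  · simpa [hs] using hfx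
  rcases eq_or_ne (w * s) 0 with hws | hws
  · simpa [hws] using hfx
  have hPQ : P = s ^ 2 * Q := by rw [hs, sq_sqrt (by positivity), div_mul_cancel₀ _ hQ.ne']
  have hfa : w ^ 2 / (w * s) * P + w * s * Q = 2 * (w * s) * Q := by
    rw [hPQ]; field_simp; ring
  have hgap : w ^ 2 / x * P + x * Q - 2 * (w * s) * Q = Q * (w * s - x) ^ 2 / x := by
    rw [hPQ]; field_simp; ring
  simp only [hfa]
  nlinarith [show 0 ≤ Q * (w * s - x) ^ 2 / x by positivity]

theorem ISdiv_eq_sum_sub {I N : Type*} [Fintype I] [Fintype N] {X Y : Matrix I N ℝ}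
    (hX : ∀ i n, 0 < X i n) (hY : ∀ i n, 0 < Y i n) :
    ISdiv X Y = ∑ i, ∑ n, (X i n / Y i n + log (Y i n)) - ∑ i, ∑ n, (log (X i n) + 1) := by
  simp only [ISdiv, ← sum_sub_distrib]
  refine sum_congr rfl fun i _ => sum_congr rfl fun n _ => ?_
  rw [log_div (hX i n).ne' (hY i n).ne']
  ring

theorem Matrix.mul_apply_pos {l m n : Type*} [Fintype m] [Nonempty m] {A : Matrix l m ℝ}
    {B : Matrix m n ℝ} (hA : ∀ i j, 0 < A i j) (hB : ∀ i j, 0 < B i j) (i : l) (k : n) :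
    0 < (A * B) i k :=
  sum_pos (fun j _ => mul_pos (hA i j) (hB j k)) univ_nonempty

noncomputable section

namespace ISNMF

variable {I K N : Type*} [Fintype K] [Fintype N]

def numer (V : Matrix I N ℝ) (W : Matrix I K ℝ) (H : Matrix K N ℝ) : Matrix I K ℝ :=
  (of fun b n => V b n * ((W * H) b n)⁻¹ ^ 2) * Hᵀ

def denom (W : Matrix I K ℝ) (H : Matrix K N ℝ) : Matrix I K ℝ :=
  (of fun b n => ((W * H) b n)⁻¹) * Hᵀ

def update (V : Matrix I N ℝ) (W : Matrix I K ℝ) (H : Matrix K N ℝ) : Matrix I K ℝ :=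
  of fun b k => W b k * √(numer V W H b k / denom W H b k)

def auxEntry (v : ℝ) (w x a : K → ℝ) : ℝ :=
  ∑ k, (w k ^ 2 / x k * (v * (w ⬝ᵥ a)⁻¹ ^ 2 * a k) + x k * ((w ⬝ᵥ a)⁻¹ * a k)) +
    log (w ⬝ᵥ a) - 1

def aux [Fintype I] (V : Matrix I N ℝ) (W : Matrix I K ℝ) (H : Matrix K N ℝ)
    (X : Matrix I K ℝ) : ℝ :=
  ∑ b, ∑ n, auxEntry (V b n) (W b) (X b) (Hᵀ n)

theorem div_add_log_le_auxEntry [Nonempty K] {v : ℝ} (hv : 0 ≤ v) {w x a : K → ℝ}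
    (hw : ∀ k, 0 < w k) (hx : ∀ k, 0 < x k) (ha : ∀ k, 0 < a k) :
    v / (x ⬝ᵥ a) + log (x ⬝ᵥ a) ≤ auxEntry v w x a := by
  have hy : 0 < x ⬝ᵥ a := sum_pos (fun k _ => mul_pos (hx k) (ha k)) univ_nonempty
  have hy₀ : 0 < w ⬝ᵥ a := sum_pos (fun k _ => mul_pos (hw k) (ha k)) univ_nonempty
  have jensen : (w ⬝ᵥ a) ^ 2 / (x ⬝ᵥ a) ≤ ∑ k, (w k * a k) ^ 2 / (x k * a k) :=
    sq_sum_div_le_sum_sq_div univ _ fun k _ => mul_pos (hx k) (ha k)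
  have convex : v / (x ⬝ᵥ a) ≤ ∑ k, w k ^ 2 / x k * (v * (w ⬝ᵥ a)⁻¹ ^ 2 * a k) := by
    have hterm : ∀ k, w k ^ 2 / x k * (v * (w ⬝ᵥ a)⁻¹ ^ 2 * a k) =
        v * (w ⬝ᵥ a)⁻¹ ^ 2 * ((w k * a k) ^ 2 / (x k * a k)) := fun k => by
      field_simp [(hx k).ne', (ha k).ne']
    calc v / (x ⬝ᵥ a) = v * (w ⬝ᵥ a)⁻¹ ^ 2 * ((w ⬝ᵥ a) ^ 2 / (x ⬝ᵥ a)) := by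
          field_simp
      _ ≤ v * (w ⬝ᵥ a)⁻¹ ^ 2 * ∑ k, (w k * a k) ^ 2 / (x k * a k) := by gcongr
      _ = _ := by simp only [hterm, mul_sum]
  have concave : log (x ⬝ᵥ a) ≤ ∑ k, x k * ((w ⬝ᵥ a)⁻¹ * a k) + log (w ⬝ᵥ a) - 1 := by
    have htangent := log_le_sub_one_of_pos (div_pos hy hy₀)
    rw [log_div hy.ne' hy₀.ne'] at htangent
    have hsum : ∑ k, x k * ((w ⬝ᵥ a)⁻¹ * a k) = x ⬝ᵥ a / (w ⬝ᵥ a) := by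
      simp only [dotProduct, sum_div]
      exact sum_congr rfl fun k _ => by ring
    linarith
  rw [auxEntry, sum_add_distrib]
  linarith

theorem auxEntry_self (v : ℝ) (w a : K → ℝ) (h : w ⬝ᵥ a ≠ 0) :
    auxEntry v w w a = v / (w ⬝ᵥ a) + log (w ⬝ᵥ a) := by
  have hw : ∀ k, w k ^ 2 / w k = w k := fun k => by rw [sq, mul_self_div_self]
  have hsum : ∑ k, (w k * (v * (w ⬝ᵥ a)⁻¹ ^ 2 * a k) + w k * ((w ⬝ᵥ a)⁻¹ * a k)) =
      (v * (w ⬝ᵥ a)⁻¹ ^ 2 + (w ⬝ᵥ a)⁻¹) * (w ⬝ᵥ a) := by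
    rw [dotProduct, mul_sum]
    exact sum_congr rfl fun k _ => by ring
  simp only [auxEntry, hw, hsum]
  field_simp
  ring

theorem aux_eq_sum_sum [Fintype I] (V : Matrix I N ℝ) (W : Matrix I K ℝ) (H : Matrix K N ℝ)
    (X : Matrix I K ℝ) :
    aux V W H X = ∑ b, ∑ k, (W b k ^ 2 / X b k * numer V W H b k + X b k * denom W H b k) +
      ∑ b, ∑ n, (log ((W * H) b n) - 1) := by
  have hWH : ∀ b n, W b ⬝ᵥ Hᵀ n = (W * H) b n := fun _ _ => rfl
  simp only [aux, auxEntry, hWH, add_sub_assoc, sum_add_distrib]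
  congr 2 <;> refine sum_congr rfl fun b _ => ?_ <;> rw [sum_comm] <;>
    simp only [numer, denom, mul_apply, of_apply, mul_sum]

theorem aux_update_le [Fintype I] {V : Matrix I N ℝ} {W : Matrix I K ℝ} {H : Matrix K N ℝ}
    (hV : ∀ b n, 0 ≤ V b n) (hW : ∀ b k, 0 ≤ W b k) (hH : ∀ k n, 0 ≤ H k n)
    {X : Matrix I K ℝ} (hX : ∀ b k, 0 < X b k) :
    aux V W H (update V W H) ≤ aux V W H X := by
  have hnumer : ∀ b k, 0 ≤ numer V W H b k := fun b k =>
    sum_nonneg fun n _ => mul_nonneg (mul_nonneg (hV b n) (sq_nonneg _)) (hH k n)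
  have hdenom : ∀ b k, 0 ≤ denom W H b k := fun b k =>
    sum_nonneg fun n _ => by
      have : 0 ≤ (W * H) b n := sum_nonneg fun j _ => mul_nonneg (hW b j) (hH j n)
      exact mul_nonneg (inv_nonneg.2 this) (hH k n)
  rw [aux_eq_sum_sum, aux_eq_sum_sum]
  refine add_le_add_left (sum_le_sum fun b _ => sum_le_sum fun k _ => ?_) _
  exact isMinOn_sq_mul_div_add_mul (W b k) (hnumer b k) (hdenom b k) (hX b k)

theorem update_pos [Nonempty K] [Nonempty N] {V : Matrix I N ℝ} {W : Matrix I K ℝ}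
    {H : Matrix K N ℝ} (hV : ∀ b n, 0 < V b n) (hW : ∀ b k, 0 < W b k) (hH : ∀ k n, 0 < H k n)
    (b : I) (k : K) : 0 < update V W H b k := by
  have hWH := mul_apply_pos hW hH
  have hnumer : 0 < numer V W H b k := sum_pos (fun n _ =>
    mul_pos (mul_pos (hV b n) (pow_pos (inv_pos.2 (hWH b n)) 2)) (hH k n)) univ_nonempty
  have hdenom : 0 < denom W H b k :=
    sum_pos (fun n _ => mul_pos (inv_pos.2 (hWH b n)) (hH k n)) univ_nonempty
  exact mul_pos (hW b k) (sqrt_pos.2 (div_pos hnumer hdenom))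

theorem ISdiv_update_mul_le [Fintype I] {V : Matrix I N ℝ} {W : Matrix I K ℝ} {H : Matrix K N ℝ}
    (hV : ∀ b n, 0 < V b n) (hW : ∀ b k, 0 < W b k) (hH : ∀ k n, 0 < H k n) :
    ISdiv V (update V W H * H) ≤ ISdiv V (W * H) := by
  cases isEmpty_or_nonempty K
  · rw [Subsingleton.elim (update V W H) W]
  cases isEmpty_or_nonempty N
  · simp [ISdiv]
  have hU := update_pos hV hW hH
  have hWH := mul_apply_pos hW hH
  rw [ISdiv_eq_sum_sub hV (mul_apply_pos hU hH), ISdiv_eq_sum_sub hV hWH, sub_le_sub_iff_right]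
  calc _ ≤ aux V W H (update V W H) := sum_le_sum fun b _ => sum_le_sum fun n _ =>
        div_add_log_le_auxEntry (hV b n).le (hW b) (hU b) (hH · n)
    _ ≤ aux V W H W := aux_update_le (hV · · |>.le) (hW · · |>.le) (hH · · |>.le) hW
    _ = _ := sum_congr rfl fun b _ => sum_congr rfl fun n _ => auxEntry_self _ _ _ (hWH b n).ne'

end ISNMF

end

/-- The majorization-minimization multiplicative basis update for
Itakura–Saito NMF does not increase the IS divergence. -/
theorem IS_NMF_basis_update_decreases_divergence
    (B K N : ℕ)
    (V : Matrix (Fin B) (Fin N) ℝ) (W : Matrix (Fin B) (Fin K) ℝ)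
    (H : Matrix (Fin K) (Fin N) ℝ)
    (hV : ∀ b n, 0 < V b n) (hW : ∀ b k, 0 < W b k) (hH : ∀ k n, 0 < H k n)
    (Wplus : Matrix (Fin B) (Fin K) ℝ)
    (hWplus : ∀ b k, Wplus b k = W b k * Real.sqrt
      ((((Matrix.of fun (b : Fin B) (n : Fin N) =>
            V b n * ((W * H) b n)⁻¹ ^ 2) * Hᵀ : Matrix (Fin B) (Fin K) ℝ) b k) /
       (((Matrix.of fun (b : Fin B) (n : Fin N) =>
            ((W * H) b n)⁻¹) * Hᵀ : Matrix (Fin B) (Fin K) ℝ) b k))) :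
    ISdiv V (Wplus * H) ≤ ISdiv V (W * H) := by
  obtain rfl : Wplus = ISNMF.update V W H := ext hWplus
  exact ISNMF.ISdiv_update_mul_le hV hW hH
end
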